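/- arXiv:1102.3130 — 6 statements merged into one kernel-verified Lean document; each statement's English description precedes it below -/
import Mathlib

section
/- Let T be the 10×10 real symmetric matrix whose rows and columns are indexed by the 2-element subsets of {1,2,3,4,5}, with entries T(s,s) = -4, T(s,t) = 7/2 if s and t share exactly one element, and T(s,t) = -9 if s and t are disjoint. Then the characteristic polynomial of T is (X + 10)·(X + 20)^5·(X - 35/2)^4; equivalently, the eigenvalues of T are -10 with multiplicity 1, -20 with multiplicity 5, and 35/2 with multiplicity 4. -/
open Polynomial

/-- The 10×10 real symmetric matrix indexed by 2-element subsets of {1,…,5},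
with `-4` on the diagonal, `7/2` when the two subsets share exactly one element,
and `-9` when they are disjoint. -/
noncomputable def HessianMatrix :
    Matrix {s : Finset (Fin 5) // s.card = 2} {s : Finset (Fin 5) // s.card = 2} ℝ :=
  fun s t =>
    if (s.1 ∩ t.1).card = 2 then -4
    else if (s.1 ∩ t.1).card = 1 then 7/2
    else -9

/-!
Let `N` be the incidence matrix of the ten pairs against the five points and `J` the all-ones
matrix. Since `(N Nᵀ) s t = |s ∩ t|` and every pair has two points,
`T + 20 I = N K Nᵀ` with `K = 25/2 I - 9/4 J`. Moving `Nᵀ` to the front,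
`χ(N K Nᵀ) = X ^ 5 χ(Nᵀ N K)`, and `Nᵀ N = 3 I + J` gives `Nᵀ N K = 75/2 I - 11/2 J`, with
eigenvalues `75/2` (four times) and `10`. Shifting by `-20` yields `-20` (five times),
`35/2` (four times) and `-10`.
-/

open Finset
open scoped Matrix

theorem Finset.card_inter_eq_left_iff {α : Type*} [DecidableEq α] {s t : Finset α}
    (h : #s = #t) : #(s ∩ t) = #s ↔ s = t := by
  refine ⟨fun hst => ?_, fun hst => by rw [hst, inter_self]⟩
  have hsub : s ⊆ t := inter_eq_left.mp (eq_of_subset_of_card_le inter_subset_left hst.ge)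
  exact eq_of_subset_of_card_le hsub h.ge

namespace Matrix

variable {n : Type*} [Fintype n] {R : Type*} [CommRing R]

theorem vecMulVec_one_one_mul_self :
    (vecMulVec 1 1 * vecMulVec 1 1 : Matrix n n R) =
      (Fintype.card n : R) • (vecMulVec 1 1 : Matrix n n R) := by
  rw [vecMulVec_mul_vecMulVec, vecMulVec_smul]
  simp

theorem charpoly_smul_one_add_smul_vecMulVec_one_one [DecidableEq n] (a b : R) :
    (a • 1 + b • vecMulVec 1 1 : Matrix n n R).charpoly =
      (X - C a) ^ Fintype.card n - C (Fintype.card n * b) * (X - C a) ^ (Fintype.card n - 1) := by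
  have hshift : (a • 1 + b • vecMulVec 1 1 : Matrix n n R) =
      vecMulVec (b • 1) 1 - scalar n (-a) := by
    rw [scalar_apply, ← smul_one_eq_diagonal, smul_vecMulVec, neg_smul, sub_neg_eq_add, add_comm]
  rw [hshift, charpoly_sub_scalar, charpoly_vecMulVec]
  simp [sub_comp, smul_eq_C_mul, ← sub_eq_add_neg, mul_comm]

variable (R) {ι α : Type*} [DecidableEq α]

def incidenceMatrix (f : ι → Finset α) : Matrix ι α R :=
  of fun i a => if a ∈ f i then 1 else 0

variable {R}

theorem incidenceMatrix_mul_transpose_apply [Fintype α] (f : ι → Finset α) (i j : ι) :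
    (incidenceMatrix R f * (incidenceMatrix R f)ᵀ) i j = #(f i ∩ f j) := by
  simp [incidenceMatrix, mul_apply, inter_comm]

theorem transpose_incidenceMatrix_mul_apply [Fintype ι] [DecidableEq ι] (f : ι → Finset α)
    (a b : α) : ((incidenceMatrix R f)ᵀ * incidenceMatrix R f) a b = #{i | a ∈ f i ∧ b ∈ f i} := by
  simp [incidenceMatrix, mul_apply, ← ite_and, sum_boole, and_comm]

theorem incidenceMatrix_mulVec_one [Fintype α] (f : ι → Finset α) :
    incidenceMatrix R f *ᵥ 1 = fun i => (#(f i) : R) := by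
  ext i
  simp [incidenceMatrix, mulVec, dotProduct]

end Matrix

namespace HessianMatrix

open Matrix

abbrev Pair : Type := {s : Finset (Fin 5) // s.card = 2}

noncomputable def incidence : Matrix Pair (Fin 5) ℝ := incidenceMatrix ℝ Subtype.val

noncomputable def innerFactor : Matrix (Fin 5) (Fin 5) ℝ :=
  (25/2 : ℝ) • 1 - (9/4 : ℝ) • vecMulVec 1 1

local notation "N" => incidence

local notation "K" => innerFactor

theorem card_pair : Fintype.card Pair = 10 := by
  rw [Fintype.card_finset_len, Fintype.card_fin]
  rfl

theorem add_twenty_smul_one_eq : HessianMatrix + (20 : ℝ) • 1 = N * K * Nᵀ := by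
  have hN : N *ᵥ 1 = fun _ => 2 := by
    rw [incidence, incidenceMatrix_mulVec_one]
    ext s
    simp [s.2]
  rw [innerFactor, Matrix.mul_sub, Matrix.sub_mul, Matrix.mul_smul, Matrix.smul_mul, Matrix.mul_one,
    Matrix.mul_smul, Matrix.smul_mul, mul_vecMulVec, vecMulVec_mul, vecMul_transpose, hN]
  ext s t
  have hle : #(s.1 ∩ t.1) ≤ 2 := (card_le_card inter_subset_left).trans_eq s.2
  have htwo : #(s.1 ∩ t.1) = 2 ↔ s = t := by
    rw [Subtype.ext_iff, ← Finset.card_inter_eq_left_iff (s.2.trans t.2.symm), s.2]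
  simp only [HessianMatrix, Matrix.add_apply, Matrix.smul_apply, Matrix.one_apply,
    Matrix.sub_apply, incidence, incidenceMatrix_mul_transpose_apply, vecMulVec_apply,
    smul_eq_mul, htwo]
  split_ifs with hst hone
  · subst hst
    norm_num [s.2]
  · rw [hone]
    norm_num
  · have hzero : #(s.1 ∩ t.1) = 0 := by
      have := htwo.not.mpr hst
      omega
    rw [hzero]
    norm_num

theorem transpose_incidence_mul_incidence : Nᵀ * N = (3 : ℝ) • 1 + vecMulVec 1 1 := by
  have hcount : ∀ a b : Fin 5, #{s : Pair | a ∈ s.1 ∧ b ∈ s.1} = if a = b then 4 else 1 := by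
    decide
  ext a b
  rw [incidence, transpose_incidenceMatrix_mul_apply, hcount]
  by_cases hab : a = b <;> simp [hab]
  norm_num

theorem transpose_incidence_mul_incidence_mul_innerFactor :
    Nᵀ * (N * K) = (75/2 : ℝ) • 1 + (-11/2 : ℝ) • vecMulVec 1 1 := by
  rw [← Matrix.mul_assoc, transpose_incidence_mul_incidence, innerFactor]
  simp only [Matrix.add_mul, Matrix.mul_sub, Matrix.smul_mul, Matrix.mul_smul, Matrix.one_mul,
    Matrix.mul_one, vecMulVec_one_one_mul_self, Fintype.card_fin]
  module

theorem charpoly_add_twenty_smul_one :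
    (HessianMatrix + (20 : ℝ) • 1).charpoly = X ^ 5 * (X - C 10) * (X - C (75/2)) ^ 4 := by
  have hle : Fintype.card (Fin 5) ≤ Fintype.card Pair := by
    rw [card_pair, Fintype.card_fin]
    norm_num
  rw [add_twenty_smul_one_eq, charpoly_mul_comm_of_le _ _ hle,
    transpose_incidence_mul_incidence_mul_innerFactor, charpoly_smul_one_add_smul_vecMulVec_one_one,
    card_pair, Fintype.card_fin, Nat.cast_ofNat]
  have hroot : C (75/2 : ℝ) + C (5 * (-11/2)) = C 10 := by
    rw [← C_add]
    norm_num
  linear_combination (-X ^ 5 * (X - C (75/2 : ℝ)) ^ 4) * hroot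

end HessianMatrix

theorem charpoly_hessianMatrix :
    HessianMatrix.charpoly =
      (X + C (10 : ℝ)) * (X + C (20 : ℝ)) ^ 5 * (X - C (35/2 : ℝ)) ^ 4 := by
  have hshift : HessianMatrix = (HessianMatrix + (20 : ℝ) • 1) - Matrix.scalar _ (20 : ℝ) := by
    rw [Matrix.scalar_apply, ← Matrix.smul_one_eq_diagonal, add_sub_cancel_right]
  rw [hshift, Matrix.charpoly_sub_scalar, HessianMatrix.charpoly_add_twenty_smul_one]
  simp only [mul_comp, pow_comp, X_comp, sub_comp, C_comp, add_sub_assoc, ← C_sub]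
  norm_num
  ring
end

section
/- Let T be the 10×10 real symmetric matrix whose rows and columns are indexed by the 2-element subsets of {1,2,3,4,5}, with entries T(s,s) = -4, T(s,t) = 7/2 if s and t share exactly one element, and T(s,t) = -9 if s and t are disjoint. Then T, viewed as a quadratic form on ℝ^10, has exactly 4 positive eigenvalues and exactly 6 negative eigenvalues (counted with multiplicity); in particular its signature (number of positive minus number of negative eigenvalues) equals -2. -/
/-!
Computing with the integer matrix `2T` shows `(2T + 20)(2T - 35)(2T + 40) = 0`, so every
eigenvalue of `T` is `-10`, `35/2` or `-20`; in particular the positive ones are exactly those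
equal to `35/2`. The polynomial `(2x + 20)(2x + 40)` vanishes at `-10` and `-20` and equals `4125`
at `35/2`, so `trace ((2T + 20)(2T + 40)) = 16500` counts four eigenvalues `35/2`.
-/

open Polynomial Finset

namespace Matrix.IsHermitian

variable {𝕜 n : Type*} [RCLike 𝕜] [Fintype n] [DecidableEq n] {A : Matrix n n 𝕜}

lemma eval_eigenvalues_eq_zero_of_aeval_eq_zero (hA : A.IsHermitian) {p : ℝ[X]}
    (hp : aeval A p = 0) (i : n) : p.eval (hA.eigenvalues i) = 0 := by
  have : Nonempty n := ⟨i⟩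
  have := spectrum.subset_polynomial_aeval A p ⟨_, hA.eigenvalues_mem_spectrum_real i, rfl⟩
  rwa [hp, spectrum.zero_eq, Set.mem_singleton_iff] at this

lemma trace_cfc (hA : A.IsHermitian) (f : ℝ → ℝ) :
    (cfc f A).trace = ∑ i, (f (hA.eigenvalues i) : 𝕜) := by
  rw [hA.cfc_eq, IsHermitian.cfc, Unitary.conjStarAlgAut_apply, trace_mul_cycle,
    Unitary.coe_star_mul_self, one_mul, trace_diagonal]
  rfl

lemma trace_aeval (hA : A.IsHermitian) (p : ℝ[X]) :
    (aeval A p).trace = ∑ i, ((p.eval (hA.eigenvalues i) : ℝ) : 𝕜) := by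
  rw [← cfc_polynomial p A hA.isSelfAdjoint, hA.trace_cfc]

end Matrix.IsHermitian

/-- `2 • HessianMatrix` with integer entries, so that `decide` can compute with it. -/
def hessianMatrixInt :
    Matrix {s : Finset (Fin 5) // s.card = 2} {s : Finset (Fin 5) // s.card = 2} ℤ :=
  fun s t =>
    if (s.1 ∩ t.1).card = 2 then -8
    else if (s.1 ∩ t.1).card = 1 then 7
    else -18

lemma hessianMatrixInt_cubic :
    (hessianMatrixInt + 20) * (hessianMatrixInt - 35) * (hessianMatrixInt + 40) = 0 := by
  decide

lemma trace_hessianMatrixInt_quadratic :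
    ((hessianMatrixInt + 20) * (hessianMatrixInt + 40)).trace = 16500 := by
  decide

lemma mapMatrix_hessianMatrixInt :
    (Int.castRingHom ℝ).mapMatrix hessianMatrixInt = 2 * HessianMatrix := by
  ext s t
  rw [two_mul, Matrix.add_apply, RingHom.mapMatrix_apply, Matrix.map_apply]
  unfold hessianMatrixInt HessianMatrix
  split_ifs <;> norm_num

lemma aeval_hessianMatrix_cubic :
    aeval HessianMatrix ((2 * X + 20) * (2 * X - 35) * (2 * X + 40) : ℝ[X]) = 0 := by
  have h := congrArg (Int.castRingHom ℝ).mapMatrix hessianMatrixInt_cubic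
  rw [map_mul, map_mul, map_add, map_sub, map_add, map_ofNat, map_ofNat, map_ofNat, map_zero,
    mapMatrix_hessianMatrixInt] at h
  simpa only [map_mul, map_add, map_sub, aeval_X, map_ofNat] using h

lemma trace_aeval_hessianMatrix_quadratic :
    (aeval HessianMatrix ((2 * X + 20) * (2 * X + 40) : ℝ[X])).trace = 16500 := by
  have h := congrArg (Int.castRingHom ℝ) trace_hessianMatrixInt_quadratic
  rw [AddMonoidHom.map_trace, ← RingHom.mapMatrix_apply, map_mul, map_add, map_add, map_ofNat,
    map_ofNat, mapMatrix_hessianMatrixInt, map_ofNat] at h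
  simpa only [map_mul, map_add, aeval_X, map_ofNat] using h

section

variable (hT : HessianMatrix.IsHermitian)
include hT

lemma eigenvalues_hessianMatrix_mem (i) :
    hT.eigenvalues i = -10 ∨ hT.eigenvalues i = 35 / 2 ∨ hT.eigenvalues i = -20 := by
  have h := hT.eval_eigenvalues_eq_zero_of_aeval_eq_zero aeval_hessianMatrix_cubic i
  simp only [eval_mul, eval_add, eval_sub, eval_X, eval_ofNat, mul_eq_zero] at h
  rcases h with (h | h) | h
  · left; linarith
  · right; left; linarith
  · right; right; linarith

lemma eigenvalues_hessianMatrix_pos_iff (i) :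
    0 < hT.eigenvalues i ↔ hT.eigenvalues i = 35 / 2 := by
  rcases eigenvalues_hessianMatrix_mem hT i with h | h | h <;> norm_num [h]

lemma eigenvalues_hessianMatrix_neg_iff (i) : hT.eigenvalues i < 0 ↔ ¬ 0 < hT.eigenvalues i := by
  rcases eigenvalues_hessianMatrix_mem hT i with h | h | h <;> norm_num [h]

lemma card_eigenvalues_hessianMatrix_eq : #{i | hT.eigenvalues i = 35 / 2} = 4 := by
  have hsum := hT.trace_aeval ((2 * X + 20) * (2 * X + 40))
  have heval (i) : ((2 * X + 20) * (2 * X + 40) : ℝ[X]).eval (hT.eigenvalues i) =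
      if hT.eigenvalues i = 35 / 2 then 4125 else 0 := by
    rcases eigenvalues_hessianMatrix_mem hT i with h | h | h <;> norm_num [h]
  simp only [trace_aeval_hessianMatrix_quadratic, heval, RCLike.ofReal_real_eq_id, id,
    sum_ite, sum_const_zero, sum_const, add_zero, nsmul_eq_mul] at hsum
  exact_mod_cast (by linarith : (#{i | hT.eigenvalues i = 35 / 2} : ℝ) = 4)

end

theorem signature_hessianMatrix (hT : HessianMatrix.IsHermitian) :
    (Finset.univ.filter fun i => 0 < hT.eigenvalues i).card = 4 ∧
    (Finset.univ.filter fun i => hT.eigenvalues i < 0).card = 6 ∧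
    ((Finset.univ.filter fun i => 0 < hT.eigenvalues i).card : ℤ) -
      ((Finset.univ.filter fun i => hT.eigenvalues i < 0).card : ℤ) = -2 := by
  have hpos : #{i | 0 < hT.eigenvalues i} = 4 := by
    simpa only [eigenvalues_hessianMatrix_pos_iff hT] using card_eigenvalues_hessianMatrix_eq hT
  have hneg : #{i | hT.eigenvalues i < 0} = 6 := by
    have hcard := card_filter_add_card_filter_not (s := univ) fun i => 0 < hT.eigenvalues i
    simp only [hpos, card_univ, Fintype.card_finset_len, Fintype.card_fin, Nat.choose_two_right,
      ← eigenvalues_hessianMatrix_neg_iff hT] at hcard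
    omega
  exact ⟨hpos, hneg, by rw [hpos, hneg]; norm_num⟩
end

section
/- Let T be the 10×10 real symmetric matrix whose rows and columns are indexed by the 2-element subsets of {1,2,3,4,5}, with entries T(s,s) = -4, T(s,t) = 7/2 if s and t share exactly one element, and T(s,t) = -9 if s and t are disjoint. Then for every complex number z, det(z·I - i·T) = (z + 10i)·(z + 20i)^5·(z - (35/2)i)^4, where I is the 10×10 identity matrix and i is the imaginary unit. -/
/-!
The matrix lies in the Bose–Mesner algebra of the Johnson scheme `J(5,2)`, so its eigenvalues
are `-10`, `-20` and `35/2` with multiplicities `1`, `5` and `4`. An explicit integer eigenbasis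
of `2T` with pairwise orthogonal columns certifies this: `PᵀP` is a nonsingular diagonal matrix, so
`P` is invertible, and `det (z - iT) = ∏ (z - iλ)` over the eigenvalues.
-/

open Matrix

namespace Matrix

variable {n R : Type*} [Fintype n] [DecidableEq n] [CommRing R]

theorem det_eq_prod_of_mul_eq_mul_diagonal {A P : Matrix n n R} {d : n → R}
    (hAP : A * P = P * diagonal d) (hP : IsUnit P.det) : A.det = ∏ i, d i := by
  have h := congrArg det hAP
  rw [det_mul, det_mul, det_diagonal, mul_comm] at h
  exact hP.mul_left_cancel h

theorem det_smul_one_sub_smul_eq_prod {A P : Matrix n n R} {d : n → R}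
    (hAP : A * P = P * diagonal d) (hP : IsUnit P.det) (z w : R) :
    (z • 1 - w • A).det = ∏ i, (z - w * d i) := by
  refine det_eq_prod_of_mul_eq_mul_diagonal ?_ hP
  have hdiag : diagonal (fun i => z - w * d i) = z • 1 - w • diagonal d := by
    ext i j
    by_cases h : i = j <;> simp [h]
  rw [hdiag, sub_mul, mul_sub, Matrix.smul_mul, Matrix.smul_mul, Matrix.mul_smul,
    Matrix.mul_smul, hAP, one_mul, mul_one]

theorem map_mul_eq_mul_diagonal_map {S : Type*} [CommRing S] (f : R →+* S)
    {A P : Matrix n n R} {d : n → R} (hAP : A * P = P * diagonal d) :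
    A.map f * P.map f = P.map f * diagonal (fun i => f (d i)) := by
  simpa [map_mul, diagonal_map] using congrArg (·.map f) hAP

theorem det_ne_zero_of_transpose_mul_self_eq_diagonal [IsDomain R] {P : Matrix n n R}
    {g : n → R} (hP : Pᵀ * P = diagonal g) (hg : ∀ i, g i ≠ 0) : P.det ≠ 0 := by
  have h := congrArg det hP
  rw [det_mul, det_transpose, det_diagonal] at h
  exact left_ne_zero_of_mul (h ▸ Finset.prod_ne_zero_iff.mpr fun i _ => hg i)

end Matrix

abbrev Pair := {s : Finset (Fin 5) // s.card = 2}

def twiceHessian : Matrix Pair Pair ℤ := fun s t =>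
  if (s.1 ∩ t.1).card = 2 then -8 else if (s.1 ∩ t.1).card = 1 then 7 else -18

theorem hessianMatrix_map_ofReal :
    HessianMatrix.map Complex.ofReal = (1 / 2 : ℂ) • twiceHessian.map Int.cast := by
  ext s t
  simp only [HessianMatrix, twiceHessian, map_apply, Matrix.smul_apply, smul_eq_mul]
  split_ifs <;> norm_num

def pairOf : Fin 10 → Pair :=
  ![⟨{0,1}, rfl⟩, ⟨{0,2}, rfl⟩, ⟨{0,3}, rfl⟩, ⟨{0,4}, rfl⟩, ⟨{1,2}, rfl⟩,
    ⟨{1,3}, rfl⟩, ⟨{1,4}, rfl⟩, ⟨{2,3}, rfl⟩, ⟨{2,4}, rfl⟩, ⟨{3,4}, rfl⟩]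

theorem pairOf_bijective : Function.Bijective pairOf := by
  rw [Fintype.bijective_iff_injective_and_card]
  exact ⟨by decide, by decide⟩

/-- Rows are indexed by `pairOf`. Column `0` is the all-ones vector, columns `1`–`5` span the
`-40`-eigenspace of `2T` and columns `6`–`9` its `35`-eigenspace. -/
def eigenbasis : Matrix (Fin 10) (Fin 10) ℤ :=
  !![1, 0, 0, 2, 2, 1, 0, -2, -4, -4;
     1, 1, 1, -1, -1, 1, -1, 1, 2, -4;
     1, -1, 1, -1, 1, -1, -1, 1, -5, 1;
     1, 0, -2, 0, -2, -1, -1, -3, 1, 1;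
     1, -1, -1, -1, -1, 1, 1, 1, 2, -4;
     1, 1, -1, -1, 1, -1, 1, 1, -5, 1;
     1, 0, 2, 0, -2, -1, 1, -3, 1, 1;
     1, 0, 0, 2, -2, -1, 0, 4, 1, 1;
     1, 0, 0, 0, 4, -1, 0, 0, 7, 1;
     1, 0, 0, 0, 0, 3, 0, 0, 0, 6]

def eigenvalues : Fin 10 → ℤ := ![-20, -40, -40, -40, -40, -40, 35, 35, 35, 35]

def eigenbasisSqNorms : Fin 10 → ℤ := ![10, 4, 12, 12, 36, 18, 6, 42, 126, 90]

theorem twiceHessian_mul_eigenbasis :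
    twiceHessian.submatrix pairOf pairOf * eigenbasis = eigenbasis * diagonal eigenvalues := by
  decide

theorem eigenbasis_transpose_mul_self : eigenbasisᵀ * eigenbasis = diagonal eigenbasisSqNorms := by
  decide

theorem isUnit_det_eigenbasis_map : IsUnit (eigenbasis.map (Int.castRingHom ℂ)).det := by
  rw [← RingHom.mapMatrix_apply, ← RingHom.map_det, isUnit_iff_ne_zero, eq_intCast,
    Int.cast_ne_zero]
  refine det_ne_zero_of_transpose_mul_self_eq_diagonal eigenbasis_transpose_mul_self ?_
  intro i
  fin_cases i <;> decide

theorem det_complex_shift_hessianMatrix (z : ℂ) :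
    ((z • (1 : Matrix {s : Finset (Fin 5) // s.card = 2}
          {s : Finset (Fin 5) // s.card = 2} ℂ))
        - Complex.I • HessianMatrix.map (Complex.ofReal)).det =
      (z + 10 * Complex.I) * (z + 20 * Complex.I) ^ 5 *
        (z - (35/2) * Complex.I) ^ 4 := by
  have hAP := map_mul_eq_mul_diagonal_map (Int.castRingHom ℂ) twiceHessian_mul_eigenbasis
  rw [hessianMatrix_map_ofReal, smul_smul,
    ← det_submatrix_equiv_self (Equiv.ofBijective pairOf pairOf_bijective)]
  simp only [submatrix_sub, submatrix_smul, Pi.sub_apply, Pi.smul_apply, submatrix_one_equiv,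
    submatrix_map]
  refine (det_smul_one_sub_smul_eq_prod hAP isUnit_det_eigenbasis_map _ _).trans ?_
  simp only [Fin.prod_univ_succ, Fin.prod_univ_zero, eigenvalues, cons_val_zero, cons_val_succ,
    eq_intCast]
  push_cast
  ring
end

section
/- Let m be a positive integer and let M be an m×m complex symmetric matrix (Mᵀ = M) such that the real m×m matrix of real parts (Re M(i,j)) is positive definite. Then the Gaussian integral I = ∫_{ℝ^m} exp(-∑_{i,j} M(i,j) x_i x_j) dx converges and satisfies I² = π^m / det M; in particular det M ≠ 0. -/
/-!
Write `M = A + i B` with `A = Re M` positive definite and `B = Im M` real symmetric.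
Simultaneous diagonalization gives a real invertible `T` with `Tᵀ A T = 1` and
`Tᵀ B T = diag d`, hence `Tᵀ M T = diag (1 + i d)`. The substitution `x = T y` splits the
integrand into one-dimensional Gaussians `exp (-(1 + i dⱼ) yⱼ²)`, whose integrals square to
`π / (1 + i dⱼ)`; the Jacobian `|det T|` together with
`det T ^ 2 * det M = ∏ⱼ (1 + i dⱼ)` gives `I² = π^m / det M`.
-/

open MeasureTheory Matrix

namespace Matrix

variable {ι κ R : Type*} [Fintype ι] [Fintype κ] [CommSemiring R]

theorem dotProduct_mulVec_eq_sum_sum (M : Matrix ι ι R) (x : ι → R) :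
    x ⬝ᵥ M *ᵥ x = ∑ i, ∑ j, M i j * x i * x j := by
  simp only [dotProduct, mulVec, Finset.mul_sum]
  exact Finset.sum_congr rfl fun i _ => Finset.sum_congr rfl fun j _ => by ring

theorem mulVec_dotProduct_mulVec_mulVec (M : Matrix ι ι R) (T : Matrix ι κ R) (y : κ → R) :
    (T *ᵥ y) ⬝ᵥ M *ᵥ (T *ᵥ y) = y ⬝ᵥ (Tᵀ * M * T) *ᵥ y := by
  rw [mulVec_mulVec, ← vecMul_transpose T, ← dotProduct_mulVec, mulVec_mulVec, Matrix.mul_assoc]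

theorem dotProduct_diagonal_mulVec [DecidableEq ι] (b y : ι → R) :
    y ⬝ᵥ diagonal b *ᵥ y = ∑ j, b j * y j ^ 2 := by
  simp only [dotProduct, mulVec_diagonal]
  exact Finset.sum_congr rfl fun j _ => by ring

end Matrix

section ChangeOfVariables

variable {ι E : Type*} [Fintype ι] [DecidableEq ι] [NormedAddCommGroup E] {T : Matrix ι ι ℝ}

theorem measurableEmbedding_mulVec (hT : T.det ≠ 0) : MeasurableEmbedding (T *ᵥ ·) :=
  ((toLin' T).equivOfDetNeZero (by rwa [LinearMap.det_toLin'])).toContinuousLinearEquiv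
    |>.toHomeomorph.measurableEmbedding

theorem map_mulVec_volume (hT : T.det ≠ 0) :
    Measure.map (T *ᵥ ·) (volume : Measure (ι → ℝ)) =
      ENNReal.ofReal |T.det|⁻¹ • volume := by
  rw [← abs_inv]
  exact Real.map_matrix_volume_pi_eq_smul_volume_pi hT

theorem integrable_comp_mulVec_iff (hT : T.det ≠ 0) {f : (ι → ℝ) → E} :
    Integrable (fun y => f (T *ᵥ y)) ↔ Integrable f := by
  change Integrable (f ∘ (T *ᵥ ·)) ↔ _
  rw [← (measurableEmbedding_mulVec hT).integrable_map_iff, map_mulVec_volume hT,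
    integrable_smul_measure (by simpa using hT) ENNReal.ofReal_ne_top]

theorem integral_comp_mulVec [NormedSpace ℝ E] (hT : T.det ≠ 0) (f : (ι → ℝ) → E) :
    ∫ y, f (T *ᵥ y) = |T.det|⁻¹ • ∫ x, f x := by
  rw [← (measurableEmbedding_mulVec hT).integral_map, map_mulVec_volume hT,
    integral_smul_measure, ENNReal.toReal_ofReal (by positivity)]

theorem sq_integral_eq_det_sq_mul_sq_integral_comp_mulVec (hT : T.det ≠ 0)
    (f : (ι → ℝ) → ℂ) :
    (∫ x, f x) ^ 2 = (T.det : ℂ) ^ 2 * (∫ y, f (T *ᵥ y)) ^ 2 := by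
  have hTabs : (T.det : ℂ) ^ 2 * ((|T.det|⁻¹ : ℝ) : ℂ) ^ 2 = 1 := by
    rw [← Complex.ofReal_pow, ← Complex.ofReal_pow, ← Complex.ofReal_mul, inv_pow, sq_abs,
      mul_inv_cancel₀ (pow_ne_zero 2 hT), Complex.ofReal_one]
  rw [integral_comp_mulVec hT, Complex.real_smul]
  linear_combination (-(∫ x, f x) ^ 2) * hTabs

end ChangeOfVariables

section Gaussian

variable {ι : Type*} [Fintype ι] {b : ι → ℂ}

theorem cexp_neg_sum_mul_sq (y : ι → ℝ) :
    Complex.exp (-∑ j, b j * (y j : ℂ) ^ 2) = ∏ j, Complex.exp (-b j * (y j : ℂ) ^ 2) := by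
  simp only [← Finset.sum_neg_distrib, Complex.exp_sum, neg_mul]

theorem integrable_cexp_neg_sum_mul_sq (hb : ∀ j, 0 < (b j).re) :
    Integrable fun y : ι → ℝ => Complex.exp (-∑ j, b j * (y j : ℂ) ^ 2) := by
  simp only [cexp_neg_sum_mul_sq]
  exact Integrable.fintype_prod fun j => integrable_cexp_neg_mul_sq (hb j)

theorem sq_integral_cexp_neg_mul_sq {b : ℂ} (hb : 0 < b.re) :
    (∫ t : ℝ, Complex.exp (-b * (t : ℂ) ^ 2)) ^ 2 = Real.pi / b := by
  rw [integral_gaussian_complex hb, one_div, ← Nat.cast_two,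
    Complex.cpow_nat_inv_pow _ two_ne_zero]

theorem sq_integral_cexp_neg_sum_mul_sq (hb : ∀ j, 0 < (b j).re) :
    (∫ y : ι → ℝ, Complex.exp (-∑ j, b j * (y j : ℂ) ^ 2)) ^ 2 =
      Real.pi ^ Fintype.card ι / ∏ j, b j := by
  simp only [cexp_neg_sum_mul_sq]
  rw [integral_fintype_prod_volume_eq_prod (fun j (t : ℝ) => Complex.exp (-b j * (t : ℂ) ^ 2)),
    ← Finset.prod_pow, Finset.prod_congr rfl fun j _ => sq_integral_cexp_neg_mul_sq (hb j),
    Finset.prod_div_distrib, Finset.prod_const, Finset.card_univ]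

end Gaussian

namespace Matrix

variable {n 𝕜 : Type*} [Fintype n]

theorem map_ofReal_transpose_mul_mul (T X : Matrix n n ℝ) :
    (T.map Complex.ofReal)ᵀ * X.map Complex.ofReal * T.map Complex.ofReal =
      (Tᵀ * X * T).map Complex.ofReal := by
  change (T.map Complex.ofRealHom)ᵀ * X.map Complex.ofRealHom * T.map Complex.ofRealHom =
    (Tᵀ * X * T).map Complex.ofRealHom
  rw [Matrix.map_mul, Matrix.map_mul, transpose_map]

variable [DecidableEq n]

open scoped ComplexOrder MatrixOrder in
theorem PosDef.exists_conjTranspose_mul_mul_eq_one_and_diagonal [RCLike 𝕜]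
    {A H : Matrix n n 𝕜} (hA : A.PosDef) (hH : H.IsHermitian) :
    ∃ (T : Matrix n n 𝕜) (d : n → ℝ), T.det ≠ 0 ∧ Tᴴ * A * T = 1 ∧
      Tᴴ * H * T = diagonal (RCLike.ofReal ∘ d) := by
  obtain ⟨B, rfl⟩ := CStarAlgebra.nonneg_iff_eq_star_mul_self.mp hA.posSemidef.nonneg
  rw [star_eq_conjTranspose] at hA ⊢
  have hB : IsUnit B.det := by
    have := (isUnit_iff_isUnit_det _).mp hA.isUnit
    rw [det_mul] at this
    exact isUnit_of_mul_isUnit_right this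
  have hC := isHermitian_conjTranspose_mul_mul B⁻¹ hH
  set Q : Matrix n n 𝕜 := (hC.eigenvectorUnitary : Matrix n n 𝕜)
  have hQ : Qᴴ * Q = 1 := Unitary.coe_star_mul_self hC.eigenvectorUnitary
  refine ⟨B⁻¹ * Q, hC.eigenvalues, ?_, ?_, ?_⟩
  · rw [det_mul]
    exact ((isUnit_nonsing_inv_det B hB).mul (isUnit_det_of_left_inverse hQ)).ne_zero
  · rw [conjTranspose_mul]
    calc Qᴴ * B⁻¹ᴴ * (Bᴴ * B) * (B⁻¹ * Q)
        _ = Qᴴ * (B * B⁻¹)ᴴ * (B * B⁻¹) * Q := by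
          simp only [conjTranspose_mul, Matrix.mul_assoc]
        _ = 1 := by simp [mul_nonsing_inv _ hB, hQ]
  · have := hC.conjStarAlgAut_star_eigenvectorUnitary
    rw [Unitary.conjStarAlgAut_star_apply] at this
    simpa [Q, conjTranspose_mul, Matrix.mul_assoc, ← star_eq_conjTranspose] using this

theorem exists_transpose_mul_mul_eq_diagonal_of_posDef_re {M : Matrix n n ℂ} (hM : Mᵀ = M)
    (hre : (M.map Complex.re).PosDef) :
    ∃ (T : Matrix n n ℝ) (d : n → ℝ), T.det ≠ 0 ∧
      (T.map Complex.ofReal)ᵀ * M * T.map Complex.ofReal =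
        diagonal fun j => 1 + d j * Complex.I := by
  have him : (M.map Complex.im).IsHermitian := by
    rw [IsHermitian, conjTranspose_eq_transpose_of_trivial, ← transpose_map, hM]
  obtain ⟨T, d, hT, hA, hH⟩ := hre.exists_conjTranspose_mul_mul_eq_one_and_diagonal him
  rw [conjTranspose_eq_transpose_of_trivial] at hA hH
  have hsplit : M = (M.map Complex.re).map Complex.ofReal +
      Complex.I • (M.map Complex.im).map Complex.ofReal := by
    ext i j
    simp [mul_comm Complex.I, Complex.re_add_im]
  refine ⟨T, d, hT, ?_⟩
  rw [hsplit, Matrix.mul_add, Matrix.add_mul, Matrix.mul_smul, Matrix.smul_mul,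
    map_ofReal_transpose_mul_mul, map_ofReal_transpose_mul_mul, hA, hH]
  ext i j
  rcases eq_or_ne i j with rfl | hij
  · simp [mul_comm]
  · simp [hij]

theorem sum_sum_mul_mulVec_eq_sum_mul_sq {M : Matrix n n ℂ} {T : Matrix n n ℝ} {b : n → ℂ}
    (h : (T.map Complex.ofReal)ᵀ * M * T.map Complex.ofReal = diagonal b) (y : n → ℝ) :
    ∑ i, ∑ j, M i j * ((T *ᵥ y) i : ℂ) * ((T *ᵥ y) j : ℂ) =
      ∑ j, b j * (y j : ℂ) ^ 2 := by
  have hTy : (fun i => ((T *ᵥ y) i : ℂ)) = T.map Complex.ofReal *ᵥ fun i => (y i : ℂ) :=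
    funext (Complex.ofRealHom.map_mulVec T y)
  rw [← dotProduct_mulVec_eq_sum_sum, hTy, mulVec_dotProduct_mulVec_mulVec, h,
    dotProduct_diagonal_mulVec]

theorem det_sq_mul_det_eq_prod {M : Matrix n n ℂ} {T : Matrix n n ℝ} {b : n → ℂ}
    (h : (T.map Complex.ofReal)ᵀ * M * T.map Complex.ofReal = diagonal b) :
    (T.det : ℂ) ^ 2 * M.det = ∏ j, b j := by
  have hTc : (T.map Complex.ofReal).det = T.det := (Complex.ofRealHom.map_det T).symm
  rw [← det_diagonal, ← h, det_mul, det_mul, det_transpose, hTc]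
  ring

end Matrix

theorem complex_gaussian_integral_general (m : ℕ)
    (M : Matrix (Fin m) (Fin m) ℂ) (hsym : Mᵀ = M)
    (hpos : (M.map Complex.re).PosDef) :
    Integrable
        (fun x : Fin m → ℝ =>
          Complex.exp (-∑ i, ∑ j, M i j * (x i : ℂ) * (x j : ℂ))) ∧
      (∫ x : Fin m → ℝ,
          Complex.exp (-∑ i, ∑ j, M i j * (x i : ℂ) * (x j : ℂ))) ^ 2 =
        (Real.pi : ℂ) ^ m / M.det ∧
      M.det ≠ 0 := by
  obtain ⟨T, d, hT, hdiag⟩ := exists_transpose_mul_mul_eq_diagonal_of_posDef_re hsym hpos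
  set b : Fin m → ℂ := fun j => 1 + d j * Complex.I
  have hb : ∀ j, 0 < (b j).re := fun j => by simp [b]
  have hprod : ∏ j, b j ≠ 0 :=
    Finset.prod_ne_zero_iff.mpr fun j _ h => (hb j).ne' (by rw [h, Complex.zero_re])
  have hdet := det_sq_mul_det_eq_prod hdiag
  have hsubst :
      (fun y => Complex.exp (-∑ i, ∑ j, M i j * ((T *ᵥ y) i : ℂ) * ((T *ᵥ y) j : ℂ))) =
        fun y => Complex.exp (-∑ j, b j * (y j : ℂ) ^ 2) := by
    simp only [sum_sum_mul_mulVec_eq_sum_mul_sq hdiag]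
  refine ⟨(integrable_comp_mulVec_iff hT).mp (hsubst ▸ integrable_cexp_neg_sum_mul_sq hb), ?_,
    right_ne_zero_of_mul (hdet ▸ hprod)⟩
  rw [sq_integral_eq_det_sq_mul_sq_integral_comp_mulVec hT, hsubst,
    sq_integral_cexp_neg_sum_mul_sq hb, Fintype.card_fin, ← hdet]
  field_simp [Complex.ofReal_ne_zero.mpr hT]

/-- The complex Gaussian integral over ℝ^m: if `M` is a complex symmetric `m × m` matrix
whose matrix of real parts is positive definite, then `∫ exp(-xᵀMx) dx` converges and its
square equals `π^m / det M`; in particular `det M ≠ 0`. -/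
theorem complex_gaussian_integral (m : ℕ) (hm : 0 < m)
    (M : Matrix (Fin m) (Fin m) ℂ) (hsym : Mᵀ = M)
    (hpos : (M.map Complex.re).PosDef) :
    Integrable
        (fun x : Fin m → ℝ =>
          Complex.exp (-∑ i, ∑ j, M i j * (x i : ℂ) * (x j : ℂ))) ∧
      (∫ x : Fin m → ℝ,
          Complex.exp (-∑ i, ∑ j, M i j * (x i : ℂ) * (x j : ℂ))) ^ 2 =
        (Real.pi : ℂ) ^ m / M.det ∧
      M.det ≠ 0 :=
  complex_gaussian_integral_general m M hsym hpos
end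

section
/- Let c > 0, a > 0 and σ be real numbers, and suppose that for every real d > 0 the identity 2^{-10}·(πd/(2a))^5 = 2^{-20}·d^{20σ-9}·c²·(πd/a)^{10} holds. Then σ = 1/5 and a = (π/2)·c^{2/5}. -/
/-!
Both sides of the hypothesis are monomials in `d`, of degree `5` and `20σ + 1`. Comparing them at
`d = 1` and `d = 2` forces equal exponents, `σ = 1/5`, and equal coefficients, which reduces to
`a⁵ = (π/2)⁵ c²`; the positive fifth root gives `a`.
-/

open Real

theorem Real.coeff_eq_and_exponent_eq_of_mul_rpow_eq {A B p q : ℝ} (hA : A ≠ 0)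
    (h : ∀ d : ℝ, 0 < d → A * d ^ p = B * d ^ q) : A = B ∧ p = q := by
  have hAB : A = B := by simpa using h 1 one_pos
  refine ⟨hAB, ?_⟩
  have h2 := h 2 two_pos
  rw [← hAB] at h2
  exact (rpow_right_inj two_pos (by norm_num)).1 (mul_left_cancel₀ hA h2)

theorem Real.eq_mul_rpow_div_of_pow_eq {x k c : ℝ} {m n : ℕ} (hn : n ≠ 0) (hx : 0 ≤ x)
    (hk : 0 ≤ k) (hc : 0 ≤ c) (h : x ^ n = k ^ n * c ^ m) : x = k * c ^ ((m : ℝ) / n) := by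
  have hroot : (k * c ^ ((m : ℝ) / n)) ^ n = k ^ n * c ^ m := by
    rw [mul_pow, ← rpow_natCast (c ^ _), ← rpow_mul hc, div_mul_cancel₀ _ (by exact_mod_cast hn),
      rpow_natCast]
  exact (pow_left_inj₀ hx (by positivity) hn).1 (h.trans hroot.symm)

/-- Proposition 2, case n = 1 (coupled Gaussian ansatz): if for all `d > 0`
`2⁻¹⁰·(πd/(2a))⁵ = 2⁻²⁰·d^{20σ-9}·c²·(πd/a)¹⁰`, then `σ = 1/5` and `a = (π/2)·c^{2/5}`. -/
theorem coupled_gaussian_width (c a σ : ℝ) (hc : 0 < c) (ha : 0 < a)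
    (h : ∀ d : ℝ, 0 < d →
      2 ^ (-10 : ℤ) * (Real.pi * d / (2 * a)) ^ 5 =
        2 ^ (-20 : ℤ) * d ^ (20 * σ - 9) * c ^ 2 * (Real.pi * d / a) ^ 10) :
    σ = 1 / 5 ∧ a = (Real.pi / 2) * c ^ ((2 : ℝ) / 5) := by
  have hmonomial : ∀ d : ℝ, 0 < d →
      (2 ^ (-10 : ℤ) * (π / (2 * a)) ^ 5) * d ^ (5 : ℝ) =
        (2 ^ (-20 : ℤ) * c ^ 2 * (π / a) ^ 10) * d ^ (20 * σ - 9 + (10 : ℕ)) := by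
    intro d hd
    rw [rpow_ofNat, rpow_add_natCast hd.ne']
    convert h d hd using 1 <;> ring
  obtain ⟨hcoeff, hexp⟩ :=
    coeff_eq_and_exponent_eq_of_mul_rpow_eq (by positivity) hmonomial
  refine ⟨by push_cast at hexp; linarith, ?_⟩
  have ha5 : a ^ 5 = (π / 2) ^ 5 * c ^ 2 := by
    field_simp at hcoeff
    linear_combination hcoeff / 2 ^ 5
  exact_mod_cast eq_mul_rpow_div_of_pow_eq (m := 2) (n := 5) (by norm_num) ha.le
    (by positivity) hc.le ha5
end

section
/- Let c > 0, let n be a real number with 0 < n < 1, let σ, A, B be real numbers with A > 0, and let N : (0,∞) → (0,∞) be a function. Suppose that for every real d > 0 both of the following hold: (i) N(d)² = (1/2)·√(π d^n/(2A)), and (ii) N(d)² = (c^{1/5}/4)·d^{2σ-9/10}·π·d^n/(A + iB) as an identity of complex numbers. Then B = 0, A = (π/2)·c^{2/5}, σ = (1/4)·(9/5 - n), and σ > 1/5. -/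
/-!
Since `N d ^ 2 > 0` by (i), condition (ii) exhibits the width `A + B i` as a real number divided
by `N d ^ 2`, so `B = 0`. Then (i) and (ii) express `A · N d ^ 2` as two power laws
in `d`, `(A/2) √(π/(2A)) · d ^ (n/2)` and `(c^{1/5} π/4) · d ^ (2σ - 9/10 + n)`; comparing
coefficients at `d = 1` gives `A`, and comparing exponents at `d = e` gives `σ`.
-/

open Real

theorem eq_and_eq_of_forall_mul_rpow_eq {a b p q : ℝ} (ha : a ≠ 0)
    (h : ∀ x : ℝ, 0 < x → a * x ^ p = b * x ^ q) : a = b ∧ p = q := by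
  have hab : a = b := by simpa using h 1 one_pos
  subst hab
  have hexp := mul_left_cancel₀ ha (h (exp 1) (exp_pos 1))
  rw [exp_one_rpow, exp_one_rpow] at hexp
  exact ⟨rfl, exp_injective hexp⟩

theorem Real.sqrt_mul_rpow {a x : ℝ} (ha : 0 ≤ a) (hx : 0 ≤ x) (p : ℝ) :
    √(a * x ^ p) = √a * x ^ (p / 2) := by
  rw [sqrt_mul ha, sqrt_eq_rpow (x ^ p), ← rpow_mul hx, div_eq_mul_one_div p 2]

theorem eq_div_two_mul_sq_of_sqrt_div_mul_div_two_eq {a A k : ℝ} (ha : 0 < a) (hA : 0 < A)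
    (h : √(a / (2 * A)) * A / 2 = k * a / 4) : A = a / 2 * k ^ 2 := by
  have hsq : a * A / 8 = a ^ 2 / 16 * k ^ 2 := by
    calc a * A / 8 = (√(a / (2 * A)) * A / 2) ^ 2 := by
          rw [div_pow, mul_pow, sq_sqrt (by positivity)]; field_simp; ring
      _ = a ^ 2 / 16 * k ^ 2 := by rw [h]; ring
  exact mul_left_cancel₀ ha.ne' (by linear_combination 8 * hsq)

theorem Complex.eq_ofReal_div_of_ofReal_eq_div {x y : ℝ} {z : ℂ} (hx : x ≠ 0)
    (h : (x : ℂ) = y / z) : z = ((y / x : ℝ) : ℂ) := by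
  have hz : z ≠ 0 := by
    rintro rfl
    exact hx (by simpa using h)
  rw [eq_div_iff hz] at h
  rw [ofReal_div, eq_div_iff (ofReal_ne_zero.mpr hx)]
  linear_combination h

theorem Complex.ofReal_add_ofReal_mul_I_eq_ofReal_iff {a b r : ℝ} :
    (a : ℂ) + b * I = r ↔ a = r ∧ b = 0 := by
  simp [Complex.ext_iff]

theorem decoupled_gaussian_width_general (c n σ A B : ℝ) (hc : 0 < c)
    (hn' : n < 1) (hA : 0 < A)
    (N : ℝ → ℝ)
    (hi : ∀ d : ℝ, 0 < d →
      (N d) ^ 2 = (1 / 2) * Real.sqrt (Real.pi * d ^ n / (2 * A)))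
    (hii : ∀ d : ℝ, 0 < d →
      ((N d : ℂ)) ^ 2 =
        ((c ^ ((1 : ℝ) / 5) / 4 : ℝ) : ℂ) * ((d ^ (2 * σ - 9 / 10) : ℝ) : ℂ) *
          (Real.pi : ℂ) * ((d ^ n : ℝ) : ℂ) / ((A : ℂ) + (B : ℂ) * Complex.I)) :
    B = 0 ∧ A = (Real.pi / 2) * c ^ ((2 : ℝ) / 5) ∧
      σ = (1 / 4) * (9 / 5 - n) ∧ σ > 1 / 5 := by
  have hNsq : ∀ d : ℝ, 0 < d → 0 < N d ^ 2 := fun d hd => by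
    rw [hi d hd]; positivity
  have hwidth : ∀ d : ℝ, 0 < d → (A : ℂ) + B * Complex.I =
      ((c ^ ((1 : ℝ) / 5) / 4 * d ^ (2 * σ - 9 / 10) * π * d ^ n / N d ^ 2 : ℝ) : ℂ) :=
    fun d hd => Complex.eq_ofReal_div_of_ofReal_eq_div (hNsq d hd).ne' (by exact_mod_cast hii d hd)
  have hB : B = 0 := (Complex.ofReal_add_ofReal_mul_I_eq_ofReal_iff.mp (hwidth 1 one_pos)).2
  have hpower : ∀ d : ℝ, 0 < d → (√(π / (2 * A)) * A / 2) * d ^ (n / 2) =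
      (c ^ ((1 : ℝ) / 5) * π / 4) * d ^ (2 * σ - 9 / 10 + n) := fun d hd => by
    have hre := (Complex.ofReal_add_ofReal_mul_I_eq_ofReal_iff.mp (hwidth d hd)).1
    have hsq := hi d hd
    rw [mul_div_right_comm, sqrt_mul_rpow (by positivity) hd.le] at hsq
    rw [eq_div_iff (hNsq d hd).ne', hsq] at hre
    rw [rpow_add hd]
    linear_combination hre
  obtain ⟨hcoef, hexp⟩ := eq_and_eq_of_forall_mul_rpow_eq (by positivity) hpower
  have hσ : σ = (1 / 4) * (9 / 5 - n) := by linarith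
  refine ⟨hB, ?_, hσ, by linarith⟩
  have hc25 : c ^ ((2 : ℝ) / 5) = (c ^ ((1 : ℝ) / 5)) ^ 2 := by
    rw [← rpow_mul_natCast hc.le]; norm_num
  rw [hc25]
  exact eq_div_two_mul_sq_of_sqrt_div_mul_div_two_eq pi_pos hA hcoef

/-- Proposition 1, case 0 < n < 1 (decoupled Gaussian ansatz): combining the normalization
condition (i) and the squared Wheeler-deWitt condition (ii) forces the width to be real,
`A = (π/2)·c^{2/5}`, and the vertex normalization `σ = (9/5 - n)/4 > 1/5`. -/
theorem decoupled_gaussian_width (c n σ A B : ℝ) (hc : 0 < c)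
    (hn : 0 < n) (hn' : n < 1) (hA : 0 < A)
    (N : ℝ → ℝ) (hNpos : ∀ d : ℝ, 0 < d → 0 < N d)
    (hi : ∀ d : ℝ, 0 < d →
      (N d) ^ 2 = (1 / 2) * Real.sqrt (Real.pi * d ^ n / (2 * A)))
    (hii : ∀ d : ℝ, 0 < d →
      ((N d : ℂ)) ^ 2 =
        ((c ^ ((1 : ℝ) / 5) / 4 : ℝ) : ℂ) * ((d ^ (2 * σ - 9 / 10) : ℝ) : ℂ) *
          (Real.pi : ℂ) * ((d ^ n : ℝ) : ℂ) / ((A : ℂ) + (B : ℂ) * Complex.I)) :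
    B = 0 ∧ A = (Real.pi / 2) * c ^ ((2 : ℝ) / 5) ∧
      σ = (1 / 4) * (9 / 5 - n) ∧ σ > 1 / 5 :=
  decoupled_gaussian_width_general c n σ A B hc hn' hA N hi hii
end
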